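/- Suppose (A0), (B1), (B2) hold: the chain is irreducible and transient on E, (E,⋆) is a semigroup with identity e contained in a group, and p(x⋆u, y⋆u) ≥ p(x,y) for all x,y,u ∈ E. Then the matrix P_H with entries p_H(x,y) = Σ_{z∈E} G(e,z) a_x(z,y) is substochastic: p_H(x,y) ≥ 0 for all x,y and Σ_{y∈E} p_H(x,y) ≤ 1 for all x ∈ E. -/

import Mathlib

open scoped ENNReal Classical BigOperators
open Filter

noncomputable section

namespace RW

variable {G : Type*}

/-- One-step transition operator `Pφ(x) = Σ_y p(x,y) φ(y)`. -/
def kapp (p : G → G → ℝ≥0∞) (φ : G → ℝ≥0∞) (x : G) : ℝ≥0∞ := ∑' y, p x y * φ y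

/-- n-step transition kernel. -/
def kiter (p : G → G → ℝ≥0∞) : ℕ → G → G → ℝ≥0∞
  | 0 => fun x y => if x = y then 1 else 0
  | n + 1 => fun x y => ∑' z, p x z * kiter p n z y

/-- Green function `G(x,y) = Σ_t ℙ_x(X(t)=y)`. -/
def green (p : G → G → ℝ≥0∞) (x y : G) : ℝ≥0∞ := ∑' n, kiter p n x y

/-- Green operator `Gφ(x) = Σ_y G(x,y) φ(y)`. -/
def greenApp (p : G → G → ℝ≥0∞) (φ : G → ℝ≥0∞) (x : G) : ℝ≥0∞ := ∑' y, green p x y * φ y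

/-- Probability of first hitting `y` at time `n ≥ 1`. -/
def fhit (p : G → G → ℝ≥0∞) : ℕ → G → G → ℝ≥0∞
  | 0 => fun _ _ => 0
  | 1 => p
  | n + 2 => fun x y => ∑' z, if z = y then 0 else p x z * fhit p (n + 1) z y

/-- Hitting probability `Q(x,y) = ℙ_x(∃ t ≥ 1, X(t) = y)`. -/
def hitProb (p : G → G → ℝ≥0∞) (x y : G) : ℝ≥0∞ := ∑' n, fhit p n x y

/-- Survival probability `ℙ_x(τ_ϑ > n)`. -/
def surv (p : G → G → ℝ≥0∞) (n : ℕ) (x : G) : ℝ≥0∞ := ∑' y, kiter p n x y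

/-- Expected lifetime `𝔼_x(τ_ϑ) = Σ_n ℙ_x(τ_ϑ > n)`. -/
def gexp (p : G → G → ℝ≥0∞) (x : G) : ℝ≥0∞ := ∑' n, surv p n x

variable [Group G]

/-- Matrix coefficients `a_u(x,y)` of the operator `A_u = T_u P - P T_u`. -/
def acoef (p : G → G → ℝ≥0∞) (E : Set G) (u x y : G) : ℝ≥0∞ :=
  if y * u⁻¹ ∈ E then p (x * u) y - p x (y * u⁻¹) else p (x * u) y

/-- The operator `A_u φ(x) = Σ_y a_u(x,y) φ(y)`. -/
def Aop (p : G → G → ℝ≥0∞) (E : Set G) (u : G) (φ : G → ℝ≥0∞) (x : G) : ℝ≥0∞ :=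
  ∑' y, acoef p E u x y * φ y

/-- Ladder height transition kernel `p_H(x,y) = G A_x 𝟙_{y}(e)`. -/
def ladder (p : G → G → ℝ≥0∞) (E : Set G) (x y : G) : ℝ≥0∞ :=
  ∑' z, green p 1 z * acoef p E x z y

/-- The renewal function `V(x) = 𝔼_x(𝒯_ϑ)` of the ladder height process. -/
def V (p : G → G → ℝ≥0∞) (E : Set G) (x : G) : ℝ≥0∞ :=
  ∑' n, surv (ladder p E) n x

end RW

end

/-!
Write `u_n(z) = P^n(e, z)`, so that `G(e, z) = Σ_n u_n(z)`. For `z ∈ E` the row sum of `a_x(z, ·)`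
satisfies `Σ_y a_x(z, y) + Σ_w p(z, w) = Σ_y p(z⋆x, y) ≤ 1`: by (B2) each entry
`p(z, y⋆x⁻¹)` is dominated by `p(z⋆x, y)`, so the truncated difference in `a_x` is a true
difference, and reindexing `y ↦ y⋆x⁻¹` turns its subtracted part into the row sum of `p(z, ·)`.
Summing against `u_n` gives `Σ_z u_n(z) Σ_y a_x(z, y) + ℙ_e(τ > n + 1) ≤ ℙ_e(τ > n)`, and these
inequalities telescope to `Σ_y p_H(x, y) ≤ ℙ_e(τ > 0) = 1`.
-/

lemma ENNReal.tsum_le_of_add_succ_le {d s : ℕ → ℝ≥0∞} (h : ∀ n, d n + s (n + 1) ≤ s n) :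
    ∑' n, d n ≤ s 0 := by
  have partial_le : ∀ N, ∑ i ∈ Finset.range N, d i + s N ≤ s 0 := by
    intro N
    induction N with
    | zero => simp
    | succ N ih =>
      calc ∑ i ∈ Finset.range (N + 1), d i + s (N + 1)
          = ∑ i ∈ Finset.range N, d i + (d N + s (N + 1)) := by
            rw [Finset.sum_range_succ, add_assoc]
        _ ≤ s 0 := le_trans (by gcongr; exact h N) ih
  exact ENNReal.tsum_le_of_sum_range_le fun N => le_trans le_self_add (partial_le N)

namespace RW

section Kernel

variable {G : Type*} (p : G → G → ℝ≥0∞)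

lemma kiter_succ_right (n : ℕ) (x y : G) :
    kiter p (n + 1) x y = ∑' z, kiter p n x z * p z y := by
  induction n generalizing x y with
  | zero =>
    simp only [kiter, mul_ite, mul_one, mul_zero, ite_mul, one_mul, zero_mul,
      tsum_ite_eq, tsum_ite_eq']
  | succ n ih =>
    calc kiter p (n + 2) x y = ∑' z, ∑' w, p x z * (kiter p n z w * p w y) := by
          simp only [kiter] at ih ⊢
          exact tsum_congr fun z => by rw [ih, ENNReal.tsum_mul_left]
      _ = ∑' w, kiter p (n + 1) x w * p w y := by
          rw [ENNReal.tsum_comm]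
          refine tsum_congr fun w => ?_
          simp only [kiter, ← ENNReal.tsum_mul_right, mul_assoc]

lemma surv_zero (x : G) : surv p 0 x = 1 := by
  simp [surv, kiter]

lemma surv_succ (n : ℕ) (x : G) :
    surv p (n + 1) x = ∑' z, kiter p n x z * ∑' w, p z w := by
  simp only [surv, kiter_succ_right, ← ENNReal.tsum_mul_left]
  exact ENNReal.tsum_comm

lemma mem_of_kiter_ne_zero {E : Set G} (hsupp : ∀ x y, p x y ≠ 0 → x ∈ E ∧ y ∈ E)
    {n : ℕ} {x z : G} (hx : x ∈ E) (h : kiter p n x z ≠ 0) : z ∈ E := by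
  induction n generalizing x with
  | zero =>
    obtain rfl : x = z := by simpa [kiter] using h
    exact hx
  | succ n ih =>
    obtain ⟨w, hw⟩ : ∃ w, p x w * kiter p n w z ≠ 0 := by
      simpa [kiter, ENNReal.tsum_eq_zero] using h
    exact ih (hsupp x w (left_ne_zero_of_mul hw)).2 (right_ne_zero_of_mul hw)

end Kernel

section Ladder

variable {G : Type*} [Group G] (p : G → G → ℝ≥0∞) (E : Set G)

lemma acoef_add_eq (hsupp : ∀ x y, p x y ≠ 0 → x ∈ E ∧ y ∈ E)
    (hmono : ∀ x ∈ E, ∀ y ∈ E, ∀ u ∈ E, p x y ≤ p (x * u) (y * u))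
    {x z : G} (hx : x ∈ E) (hz : z ∈ E) (y : G) :
    acoef p E x z y + p z (y * x⁻¹) = p (z * x) y := by
  by_cases hy : y * x⁻¹ ∈ E
  · rw [acoef, if_pos hy]
    refine tsub_add_cancel_of_le ?_
    simpa using hmono z hz _ hy x hx
  · have hzero : p z (y * x⁻¹) = 0 := by
      by_contra hne
      exact hy (hsupp _ _ hne).2
    rw [acoef, if_neg hy, hzero, add_zero]

lemma tsum_acoef_add_tsum_le_one (hsupp : ∀ x y, p x y ≠ 0 → x ∈ E ∧ y ∈ E)
    (hsub : ∀ x, ∑' y, p x y ≤ 1)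
    (hmono : ∀ x ∈ E, ∀ y ∈ E, ∀ u ∈ E, p x y ≤ p (x * u) (y * u))
    {x z : G} (hx : x ∈ E) (hz : z ∈ E) :
    ∑' y, acoef p E x z y + ∑' w, p z w ≤ 1 := by
  calc ∑' y, acoef p E x z y + ∑' w, p z w
      = ∑' y, (acoef p E x z y + p z (y * x⁻¹)) := by
        rw [ENNReal.tsum_add]
        congr 1
        exact ((Equiv.mulRight x⁻¹).tsum_eq (p z)).symm
    _ = ∑' y, p (z * x) y := tsum_congr (acoef_add_eq p E hsupp hmono hx hz)
    _ ≤ 1 := hsub _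

lemma tsum_ladder_eq (x : G) :
    ∑' y, ladder p E x y = ∑' n, ∑' z, kiter p n 1 z * ∑' y, acoef p E x z y := by
  calc ∑' y, ladder p E x y = ∑' z, green p 1 z * ∑' y, acoef p E x z y := by
        simp only [ladder, ← ENNReal.tsum_mul_left]
        exact ENNReal.tsum_comm
    _ = ∑' n, ∑' z, kiter p n 1 z * ∑' y, acoef p E x z y := by
        simp only [green, ← ENNReal.tsum_mul_right]
        exact ENNReal.tsum_comm

lemma tsum_kiter_mul_tsum_acoef_add_surv_le (hsupp : ∀ x y, p x y ≠ 0 → x ∈ E ∧ y ∈ E)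
    (hsub : ∀ x, ∑' y, p x y ≤ 1)
    (hmono : ∀ x ∈ E, ∀ y ∈ E, ∀ u ∈ E, p x y ≤ p (x * u) (y * u))
    {a x : G} (ha : a ∈ E) (hx : x ∈ E) (n : ℕ) :
    ∑' z, kiter p n a z * ∑' y, acoef p E x z y + surv p (n + 1) a ≤ surv p n a := by
  rw [surv_succ, ← ENNReal.tsum_add]
  calc ∑' z, (kiter p n a z * ∑' y, acoef p E x z y + kiter p n a z * ∑' w, p z w)
      ≤ ∑' z, kiter p n a z * 1 := by
        refine ENNReal.tsum_le_tsum fun z => ?_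
        by_cases hz : kiter p n a z = 0
        · simp [hz]
        · rw [← mul_add]
          gcongr
          exact tsum_acoef_add_tsum_le_one p E hsupp hsub hmono hx
            (mem_of_kiter_ne_zero p hsupp ha hz)
    _ = surv p n a := by simp [surv]

end Ladder

end RW

open RW

theorem statement7_general {G : Type*} [Group G]
    (p : G → G → ℝ≥0∞) (E : Set G)
    (hsupp : ∀ x y, p x y ≠ 0 → x ∈ E ∧ y ∈ E)
    (hsub : ∀ x, (∑' y, p x y) ≤ 1)
    (hone : (1 : G) ∈ E)
    (hmono : ∀ x ∈ E, ∀ y ∈ E, ∀ u ∈ E, p x y ≤ p (x * u) (y * u)) :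
    (∀ x y, 0 ≤ ladder p E x y) ∧
    ∀ x ∈ E, (∑' y : G, ladder p E x y) ≤ 1 := by
  refine ⟨fun _ _ => zero_le, fun x hx => ?_⟩
  rw [tsum_ladder_eq, ← surv_zero p (1 : G)]
  exact ENNReal.tsum_le_of_add_succ_le
    (tsum_kiter_mul_tsum_acoef_add_surv_le p E hsupp hsub hmono hone hx)

theorem statement7 {G : Type*} [Group G] [Countable G]
    (p : G → G → ℝ≥0∞) (E : Set G)
    (hsupp : ∀ x y, p x y ≠ 0 → x ∈ E ∧ y ∈ E)
    (hsub : ∀ x, (∑' y, p x y) ≤ 1)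
    (hirr : ∀ x ∈ E, ∀ y ∈ E, 0 < hitProb p x y)
    (htrans : ∀ x ∈ E, green p x x < ⊤)
    (hone : (1 : G) ∈ E)
    (hmul : ∀ x ∈ E, ∀ y ∈ E, x * y ∈ E)
    (hmono : ∀ x ∈ E, ∀ y ∈ E, ∀ u ∈ E, p x y ≤ p (x * u) (y * u)) :
    (∀ x y, 0 ≤ ladder p E x y) ∧
    ∀ x ∈ E, (∑' y : G, ladder p E x y) ≤ 1 :=
  statement7_general p E hsupp hsub hone hmono
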